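/- Fix integers m ≥ 1 and ℓ ≥ 1 and nonempty subsets (clusters) C_1, …, C_ℓ of {1,…,m}; for each r let Ω_r := diag(1_{C_r}) − (1/|C_r|) 1_{C_r} 1_{C_r}^T ∈ ℝ^{m×m}. Let M ∈ ℝ^{m×m} be symmetric positive definite, let P_r be the Moore–Penrose pseudoinverse of Ω_r M Ω_r, and set F_r := I − P_r M. Then the following are equivalent: (i) the only x ∈ ℝ^m with 1^T x = 0 satisfying F_r x = x for all r = 1, …, ℓ is x = 0; (ii) the sum of the column spaces of Ω_1, …, Ω_ℓ equals the hyperplane ker 1^T = {x ∈ ℝ^m : 1^T x = 0}. -/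

import Mathlib

/-!
Because `Ω_r` and `M` are symmetric and `M` is positive definite, `ker P_r = ker (Ω_r M Ω_r)ᵀ =
ker Ω_r`, so `F_r x = x` iff `Ω_r M x = 0`, i.e. iff `M x` is orthogonal to the sum `S` of the
column spaces of the `Ω_r`. Always `S ≤ ker 1ᵀ`. If equality holds, a common fixed point `x` in
`ker 1ᵀ = S` satisfies `xᵀ M x = 0`, so `x = 0`. Conversely, (i) says that `x ↦ (s ↦ sᵀ M x)`
embeds `ker 1ᵀ` into the dual of `S`, so `dim ker 1ᵀ ≤ dim S`.
-/

open Matrix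

/-- The centering matrix `Ω_C = diag(1_C) − (1/|C|) 1_C 1_Cᵀ` associated with a cluster `C`. -/
noncomputable def Omega {m : ℕ} (C : Finset (Fin m)) : Matrix (Fin m) (Fin m) ℝ :=
  Matrix.diagonal (fun i => if i ∈ C then (1 : ℝ) else 0) -
    (1 / (C.card : ℝ)) • Matrix.vecMulVec (fun i => if i ∈ C then (1 : ℝ) else 0)
      (fun i => if i ∈ C then (1 : ℝ) else 0)

/-- `P` is the Moore–Penrose pseudoinverse of `B`. -/
def IsMP {m : ℕ} (B P : Matrix (Fin m) (Fin m) ℝ) : Prop :=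
  B * P * B = B ∧ P * B * P = P ∧ (B * P)ᵀ = B * P ∧ (P * B)ᵀ = P * B

namespace Matrix

variable {R n : Type*} [Field R] [Fintype n]

lemma PosDef.eq_zero_of_dotProduct_mulVec_self_eq_zero {M : Matrix n n ℝ} (hM : M.PosDef)
    {x : n → ℝ} (hx : x ⬝ᵥ (M *ᵥ x) = 0) : x = 0 := by
  by_contra hne
  simpa [star_trivial, hx] using hM.dotProduct_mulVec_pos hne

lemma PosDef.transpose_mul_mul_mulVec_eq_zero_iff {k : Type*} [Fintype k]
    {M : Matrix n n ℝ} (hM : M.PosDef) (A : Matrix n k ℝ) (v : k → ℝ) :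
    (Aᵀ * M * A) *ᵥ v = 0 ↔ A *ᵥ v = 0 := by
  refine ⟨fun h => hM.eq_zero_of_dotProduct_mulVec_self_eq_zero ?_, fun h => ?_⟩
  · have : v ⬝ᵥ ((Aᵀ * M * A) *ᵥ v) = 0 := by rw [h, dotProduct_zero]
    rwa [← mulVec_mulVec, ← mulVec_mulVec, dotProduct_mulVec, vecMul_transpose] at this
  · rw [← mulVec_mulVec, h, mulVec_zero]

lemma forall_mem_iSup_range_dotProduct_eq_zero_iff {ι : Type*} (A : ι → Matrix n n R)
    (hA : ∀ i, (A i)ᵀ = A i) (w : n → R) :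
    (∀ s ∈ ⨆ i, LinearMap.range (A i).mulVecLin, s ⬝ᵥ w = 0) ↔ ∀ i, A i *ᵥ w = 0 := by
  have hdot : ∀ i y, (A i *ᵥ y) ⬝ᵥ w = (A i *ᵥ w) ⬝ᵥ y := fun i y => by
    rw [dotProduct_comm, dotProduct_mulVec, ← hA i, vecMul_transpose, hA]
  calc (∀ s ∈ ⨆ i, LinearMap.range (A i).mulVecLin, s ⬝ᵥ w = 0)
      ↔ ⨆ i, LinearMap.range (A i).mulVecLin ≤ LinearMap.ker ((dotProductBilin R R).flip w) :=
        Iff.rfl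
    _ ↔ ∀ i y, (A i *ᵥ y) ⬝ᵥ w = 0 := by
        simp [iSup_le_iff, LinearMap.range_le_ker_iff, LinearMap.ext_iff]
    _ ↔ ∀ i, A i *ᵥ w = 0 := by
        simp only [hdot, dotProduct_eq_zero_iff]

lemma eq_of_le_of_forall_dotProduct_mulVec_eq_zero (M : Matrix n n R)
    {S K : Submodule R (n → R)} (hSK : S ≤ K)
    (h : ∀ x ∈ K, (∀ s ∈ S, s ⬝ᵥ (M *ᵥ x) = 0) → x = 0) : S = K := by
  classical
  let φ : K →ₗ[R] Module.Dual R S := ((toLinearMap₂' R M).domRestrict₁₂ S K).flip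
  have hφ : Function.Injective φ := by
    rw [← LinearMap.ker_eq_bot, LinearMap.ker_eq_bot']
    intro x hx
    refine Subtype.ext (h x x.2 fun s hs => ?_)
    simpa [φ, LinearMap.domRestrict₁₂_apply, toLinearMap₂'_apply'] using
      LinearMap.congr_fun hx ⟨s, hs⟩
  refine Submodule.eq_of_le_of_finrank_le hSK ?_
  simpa [Subspace.dual_finrank_eq] using LinearMap.finrank_le_finrank_of_injective hφ

end Matrix

lemma IsMP.mulVec_eq_zero_iff {m : ℕ} {B P : Matrix (Fin m) (Fin m) ℝ} (h : IsMP B P)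
    (v : Fin m → ℝ) : P *ᵥ v = 0 ↔ Bᵀ *ᵥ v = 0 := by
  obtain ⟨hBPB, hPBP, hBP, -⟩ := h
  have hP : P = P * Pᵀ * Bᵀ := by
    rw [mul_assoc, ← transpose_mul, hBP, ← mul_assoc, hPBP]
  have hB : Bᵀ = Bᵀ * B * P := by
    conv_lhs => rw [← hBPB]
    rw [transpose_mul, transpose_mul, ← transpose_mul, hBP, mul_assoc]
  constructor
  · intro hv
    rw [hB, ← mulVec_mulVec, hv, mulVec_zero]
  · intro hv
    rw [hP, ← mulVec_mulVec, hv, mulVec_zero]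

lemma IsMP.one_sub_mul_mulVec_eq_self_iff {m : ℕ} {A M P : Matrix (Fin m) (Fin m) ℝ}
    (hA : Aᵀ = A) (hM : M.PosDef) (hP : IsMP (A * M * A) P) (x : Fin m → ℝ) :
    (1 - P * M) *ᵥ x = x ↔ A *ᵥ (M *ᵥ x) = 0 := by
  have hMt : Mᵀ = M := (conjTranspose_eq_transpose_of_trivial M).symm.trans hM.isHermitian.eq
  have hBt : (A * M * A)ᵀ = Aᵀ * M * A := by
    rw [transpose_mul, transpose_mul, hMt, hA, mul_assoc]
  rw [sub_mulVec, one_mulVec, sub_eq_self, ← mulVec_mulVec, hP.mulVec_eq_zero_iff, hBt,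
    hM.transpose_mul_mul_mulVec_eq_zero_iff]

lemma Omega_transpose {m : ℕ} (C : Finset (Fin m)) : (Omega C)ᵀ = Omega C := by
  simp only [Omega, transpose_sub, transpose_smul, diagonal_transpose, transpose_vecMulVec]

lemma one_vecMul_Omega {m : ℕ} (C : Finset (Fin m)) : (1 : Fin m → ℝ) ᵥ* Omega C = 0 := by
  ext j
  by_cases hj : j ∈ C
  · have hC : (C.card : ℝ) ≠ 0 := by simpa using Finset.ne_empty_of_mem hj
    simp [Omega, vecMul, dotProduct, diagonal_apply, vecMulVec_apply, hj, hC]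
  · simp [Omega, vecMul, dotProduct, diagonal_apply, vecMulVec_apply, hj]

lemma range_Omega_le_ker_sum {m : ℕ} (C : Finset (Fin m)) :
    LinearMap.range (Omega C).mulVecLin
      ≤ LinearMap.ker (∑ i : Fin m, (LinearMap.proj i : (Fin m → ℝ) →ₗ[ℝ] ℝ)) := by
  rintro _ ⟨y, rfl⟩
  have : ∑ i, (Omega C *ᵥ y) i = 0 := by
    rw [← one_dotProduct, dotProduct_mulVec, one_vecMul_Omega, zero_dotProduct]
  simpa using this

theorem fixed_points_iff_span_general (m ℓ : ℕ)
    (C : Fin ℓ → Finset (Fin m))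
    (M : Matrix (Fin m) (Fin m) ℝ) (hM : M.PosDef)
    (P : Fin ℓ → Matrix (Fin m) (Fin m) ℝ)
    (hP : ∀ r, IsMP (Omega (C r) * M * Omega (C r)) (P r))
    (F : Fin ℓ → Matrix (Fin m) (Fin m) ℝ) (hF : ∀ r, F r = 1 - P r * M) :
    (∀ x : Fin m → ℝ, (∑ i, x i = 0) → (∀ r, (F r).mulVec x = x) → x = 0) ↔
    (⨆ r, LinearMap.range (Omega (C r)).mulVecLin)
      = LinearMap.ker (∑ i : Fin m, (LinearMap.proj i : (Fin m → ℝ) →ₗ[ℝ] ℝ)) := by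
  set S := ⨆ r, LinearMap.range (Omega (C r)).mulVecLin
  set K := LinearMap.ker (∑ i : Fin m, (LinearMap.proj i : (Fin m → ℝ) →ₗ[ℝ] ℝ))
  have mem_K : ∀ x, x ∈ K ↔ ∑ i, x i = 0 := fun x => by simp [K]
  have fixed_iff : ∀ x, (∀ r, F r *ᵥ x = x) ↔ ∀ s ∈ S, s ⬝ᵥ (M *ᵥ x) = 0 := fun x => by
    simp only [hF, (hP _).one_sub_mul_mulVec_eq_self_iff (Omega_transpose _) hM]
    exact (forall_mem_iSup_range_dotProduct_eq_zero_iff _ (fun r => Omega_transpose _) _).symm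
  constructor
  · intro h
    exact eq_of_le_of_forall_dotProduct_mulVec_eq_zero M
      (iSup_le fun r => range_Omega_le_ker_sum _)
      fun x hx hMx => h x ((mem_K x).1 hx) ((fixed_iff x).2 hMx)
  · intro hSK x hx hFx
    exact hM.eq_zero_of_dotProduct_mulVec_self_eq_zero
      ((fixed_iff x).1 hFx x (hSK ▸ (mem_K x).2 hx))

/-- The only common fixed point of the maps `F_r = I − P_r M` in the hyperplane
`ker 1ᵀ` is `0`, if and only if the sum of the column spaces of the `Ω_r` equals `ker 1ᵀ`. -/
theorem fixed_points_iff_span (m ℓ : ℕ) (hm : 1 ≤ m) (hℓ : 1 ≤ ℓ)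
    (C : Fin ℓ → Finset (Fin m)) (hC : ∀ r, (C r).Nonempty)
    (M : Matrix (Fin m) (Fin m) ℝ) (hM : M.PosDef)
    (P : Fin ℓ → Matrix (Fin m) (Fin m) ℝ)
    (hP : ∀ r, IsMP (Omega (C r) * M * Omega (C r)) (P r))
    (F : Fin ℓ → Matrix (Fin m) (Fin m) ℝ) (hF : ∀ r, F r = 1 - P r * M) :
    (∀ x : Fin m → ℝ, (∑ i, x i = 0) → (∀ r, (F r).mulVec x = x) → x = 0) ↔
    (⨆ r, LinearMap.range (Omega (C r)).mulVecLin)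
      = LinearMap.ker (∑ i : Fin m, (LinearMap.proj i : (Fin m → ℝ) →ₗ[ℝ] ℝ)) :=
  fixed_points_iff_span_general m ℓ C M hM P hP F hF
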